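/- Fix n : ℕ. Suppose p and p' are phase normal forms with data (a₀, a, b, c) and (a₀', a', b', c') respectively, i.e., p x = a₀ + ∑_i (a i)·⟨x i⟩ + ∑_{i<j} ⟨b i j⟩·⟨x i + x j⟩ + ∑_{i<j<k} ⟨c i j k⟩·⟨x i + x j + x k⟩ in ZMod 8, and similarly for p'. If p x = p' x for every x : Fin n → ZMod 2, then a₀ = a₀', a = a', b = b', and c = c' (the latter two as functions on pairs i < j and triples i < j < k respectively). -/
import Mathlib


open scoped BigOperators

/-- The type of pairs `i < j` in `Fin n`. -/
abbrev Pair (n : ℕ) := {p : Fin n × Fin n // p.1 < p.2}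

/-- The type of triples `i < j < k` in `Fin n`. -/
abbrev Triple (n : ℕ) := {t : Fin n × Fin n × Fin n // t.1 < t.2.1 ∧ t.2.1 < t.2.2}

/-- The phase normal form with data `(a₀, a, b, c)`, as a function
`(Fin n → ZMod 2) → ZMod 8`. Here `⟨·⟩` is realized by casting `.val` into `ZMod 8`. -/
def pnf {n : ℕ} (a₀ : ZMod 8) (a : Fin n → ZMod 8) (b : Pair n → ZMod 4)
    (c : Triple n → ZMod 2) (x : Fin n → ZMod 2) : ZMod 8 :=
  a₀ + ∑ i : Fin n, a i * ((x i).val : ZMod 8)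
    + ∑ p : Pair n, ((b p).val : ZMod 8) * ((x p.val.1 + x p.val.2).val : ZMod 8)
    + ∑ t : Triple n,
        ((c t).val : ZMod 8) * ((x t.val.1 + x t.val.2.1 + x t.val.2.2).val : ZMod 8)

namespace PnfAux

variable {n : ℕ}

def e (S : Finset (Fin n)) : Fin n → ZMod 2 := fun i => if i ∈ S then 1 else 0

def q1 (x : Fin n → ZMod 2) (m : Fin n) : ZMod 8 := ((x m).val : ZMod 8)
def q2 (x : Fin n → ZMod 2) (p : Pair n) : ZMod 8 := ((x p.val.1 + x p.val.2).val : ZMod 8)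
def q3 (x : Fin n → ZMod 2) (t : Triple n) : ZMod 8 :=
  ((x t.val.1 + x t.val.2.1 + x t.val.2.2).val : ZMod 8)

def P (A₀ : ZMod 8) (A : Fin n → ZMod 8) (B : Pair n → ZMod 8)
    (C : Triple n → ZMod 8) (x : Fin n → ZMod 2) : ZMod 8 :=
  A₀ + ∑ i : Fin n, A i * q1 x i + ∑ p : Pair n, B p * q2 x p + ∑ t : Triple n, C t * q3 x t

lemma pnf_eq_P (a₀ : ZMod 8) (a : Fin n → ZMod 8) (b : Pair n → ZMod 4)
    (c : Triple n → ZMod 2) (x : Fin n → ZMod 2) :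
    pnf a₀ a b c x
      = P a₀ a (fun p => ((b p).val : ZMod 8)) (fun t => ((c t).val : ZMod 8)) x := rfl

lemma P_sub (A₀ A₀' : ZMod 8) (A A' : Fin n → ZMod 8) (B B' : Pair n → ZMod 8)
    (C C' : Triple n → ZMod 8) (x : Fin n → ZMod 2) :
    P A₀ A B C x - P A₀' A' B' C' x
      = P (A₀ - A₀') (A - A') (B - B') (C - C') x := by
  simp only [P, Pi.sub_apply, sub_mul, Finset.sum_sub_distrib]
  ring

/- Pointwise combination lemmas -/

lemma N1 (i j k m : Fin n) (hij : i < j) (hjk : j < k) :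
    q1 (e {i}) m + q1 (e {j}) m + q1 (e {k}) m + q1 (e {i,j,k}) m
    = q1 (e {i,j}) m + q1 (e {i,k}) m + q1 (e {j,k}) m + q1 (e (∅ : Finset (Fin n))) m := by
  have h1 : i ≠ j := hij.ne
  have h2 : j ≠ k := hjk.ne
  have h3 : i ≠ k := (hij.trans hjk).ne
  by_cases e1 : m = i <;> by_cases e2 : m = j <;> by_cases e3 : m = k <;>
    simp_all [q1, e] <;> first | omega | decide

set_option maxHeartbeats 1000000 in
lemma N2 (i j k : Fin n) (hij : i < j) (hjk : j < k) (p : Pair n) :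
    q2 (e {i}) p + q2 (e {j}) p + q2 (e {k}) p + q2 (e {i,j,k}) p
    = q2 (e {i,j}) p + q2 (e {i,k}) p + q2 (e {j,k}) p + q2 (e (∅ : Finset (Fin n))) p := by
  obtain ⟨⟨u, v⟩, huv⟩ := p
  replace huv : u < v := huv
  have h1 : i ≠ j := hij.ne
  have h2 : j ≠ k := hjk.ne
  have h3 : i ≠ k := (hij.trans hjk).ne
  have h4 : u ≠ v := huv.ne
  by_cases e1 : u = i <;> by_cases e2 : u = j <;> by_cases e3 : u = k <;>
  by_cases e4 : v = i <;> by_cases e5 : v = j <;> by_cases e6 : v = k <;>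
    simp_all [q2, e] <;> first | omega | decide

set_option maxHeartbeats 4000000 in
lemma N3 (i j k : Fin n) (hij : i < j) (hjk : j < k) (t : Triple n) :
    q3 (e {i}) t + q3 (e {j}) t + q3 (e {k}) t + q3 (e {i,j,k}) t
    = q3 (e {i,j}) t + q3 (e {i,k}) t + q3 (e {j,k}) t + q3 (e (∅ : Finset (Fin n))) t
      + (if t = (⟨(i,j,k), hij, hjk⟩ : Triple n) then 4 else 0) := by
  obtain ⟨⟨u, v, w⟩, huv, hvw⟩ := t
  replace huv : u < v := huv
  replace hvw : v < w := hvw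
  have h1 : i ≠ j := hij.ne
  have h2 : j ≠ k := hjk.ne
  have h3 : i ≠ k := (hij.trans hjk).ne
  have h4 : u ≠ v := huv.ne
  have h5 : v ≠ w := hvw.ne
  have h6 : u ≠ w := (huv.trans hvw).ne
  by_cases e1 : u = i <;> by_cases e2 : u = j <;> by_cases e3 : u = k <;>
  by_cases e4 : v = i <;> by_cases e5 : v = j <;> by_cases e6 : v = k <;>
  by_cases e7 : w = i <;> by_cases e8 : w = j <;> by_cases e9 : w = k <;>
    simp_all [q3, e] <;> first | omega | decide

lemma M1 (i j m : Fin n) (hij : i < j) :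
    q1 (e {i}) m + q1 (e {j}) m
    = q1 (e {i,j}) m + q1 (e (∅ : Finset (Fin n))) m := by
  have h1 : i ≠ j := hij.ne
  by_cases e1 : m = i <;> by_cases e2 : m = j <;>
    simp_all [q1, e] <;> first | omega | decide

lemma M2 (i j : Fin n) (hij : i < j) (p : Pair n) :
    q2 (e {i}) p + q2 (e {j}) p
    = q2 (e {i,j}) p + q2 (e (∅ : Finset (Fin n))) p
      + (if p = (⟨(i,j), hij⟩ : Pair n) then 2 else 0) := by
  obtain ⟨⟨u, v⟩, huv⟩ := p
  replace huv : u < v := huv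
  have h1 : i ≠ j := hij.ne
  have h4 : u ≠ v := huv.ne
  by_cases e1 : u = i <;> by_cases e2 : u = j <;>
  by_cases e4 : v = i <;> by_cases e5 : v = j <;>
    simp_all [q2, e] <;> first | omega | decide

end PnfAux

namespace PnfAux2
open PnfAux
variable {n : ℕ}

lemma expand4 (A₀ : ZMod 8) (A : Fin n → ZMod 8) (B : Pair n → ZMod 8)
    (C : Triple n → ZMod 8) (x1 x2 x3 x4 : Fin n → ZMod 2) :
    P A₀ A B C x1 + P A₀ A B C x2 + P A₀ A B C x3 + P A₀ A B C x4
    = 4 * A₀ + ∑ m : Fin n, A m * (q1 x1 m + q1 x2 m + q1 x3 m + q1 x4 m)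
      + ∑ p : Pair n, B p * (q2 x1 p + q2 x2 p + q2 x3 p + q2 x4 p)
      + ∑ t : Triple n, C t * (q3 x1 t + q3 x2 t + q3 x3 t + q3 x4 t) := by
  simp only [P, mul_add, Finset.sum_add_distrib]
  ring

lemma expand2 (A₀ : ZMod 8) (A : Fin n → ZMod 8) (B : Pair n → ZMod 8)
    (C : Triple n → ZMod 8) (x1 x2 : Fin n → ZMod 2) :
    P A₀ A B C x1 + P A₀ A B C x2
    = 2 * A₀ + ∑ m : Fin n, A m * (q1 x1 m + q1 x2 m)
      + ∑ p : Pair n, B p * (q2 x1 p + q2 x2 p)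
      + ∑ t : Triple n, C t * (q3 x1 t + q3 x2 t) := by
  simp only [P, mul_add, Finset.sum_add_distrib]
  ring

lemma keyC (A₀ : ZMod 8) (A : Fin n → ZMod 8) (B : Pair n → ZMod 8) (C : Triple n → ZMod 8)
    (h : ∀ x, P A₀ A B C x = 0) {i j k : Fin n} (hij : i < j) (hjk : j < k) :
    4 * C ⟨(i,j,k), hij, hjk⟩ = 0 := by
  have key : P A₀ A B C (e {i}) + P A₀ A B C (e {j}) + P A₀ A B C (e {k})
        + P A₀ A B C (e {i,j,k})
      = P A₀ A B C (e {i,j}) + P A₀ A B C (e {i,k}) + P A₀ A B C (e {j,k})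
        + P A₀ A B C (e (∅ : Finset (Fin n)))
        + 4 * C ⟨(i,j,k), hij, hjk⟩ := by
    rw [expand4, expand4]
    have hA : ∑ m : Fin n, A m * (q1 (e {i}) m + q1 (e {j}) m + q1 (e {k}) m + q1 (e {i,j,k}) m)
        = ∑ m : Fin n, A m * (q1 (e {i,j}) m + q1 (e {i,k}) m + q1 (e {j,k}) m
            + q1 (e (∅ : Finset (Fin n))) m) :=
      Finset.sum_congr rfl fun m _ => by rw [N1 i j k m hij hjk]
    have hB : ∑ p : Pair n, B p * (q2 (e {i}) p + q2 (e {j}) p + q2 (e {k}) p + q2 (e {i,j,k}) p)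
        = ∑ p : Pair n, B p * (q2 (e {i,j}) p + q2 (e {i,k}) p + q2 (e {j,k}) p
            + q2 (e (∅ : Finset (Fin n))) p) :=
      Finset.sum_congr rfl fun p _ => by rw [N2 i j k hij hjk p]
    have hC : ∑ t : Triple n, C t * (q3 (e {i}) t + q3 (e {j}) t + q3 (e {k}) t + q3 (e {i,j,k}) t)
        = ∑ t : Triple n, C t * (q3 (e {i,j}) t + q3 (e {i,k}) t + q3 (e {j,k}) t
            + q3 (e (∅ : Finset (Fin n))) t)
          + 4 * C ⟨(i,j,k), hij, hjk⟩ := by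
      have step : ∀ t : Triple n,
          C t * (q3 (e {i}) t + q3 (e {j}) t + q3 (e {k}) t + q3 (e {i,j,k}) t)
          = C t * (q3 (e {i,j}) t + q3 (e {i,k}) t + q3 (e {j,k}) t
              + q3 (e (∅ : Finset (Fin n))) t)
            + (if t = (⟨(i,j,k), hij, hjk⟩ : Triple n) then 4 * C t else 0) := by
        intro t
        rw [N3 i j k hij hjk t, mul_add]
        congr 1
        split <;> ring
      rw [Finset.sum_congr rfl fun t _ => step t, Finset.sum_add_distrib,
        Finset.sum_ite_eq' Finset.univ _ (fun t => 4 * C t)]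
      simp
    rw [hA, hB, hC]
    ring
  simp only [h] at key
  simpa using key.symm

lemma keyB (A₀ : ZMod 8) (A : Fin n → ZMod 8) (B : Pair n → ZMod 8) (C : Triple n → ZMod 8)
    (h : ∀ x, P A₀ A B C x = 0) (hC : ∀ t, C t = 0) {i j : Fin n} (hij : i < j) :
    2 * B ⟨(i,j), hij⟩ = 0 := by
  have key : P A₀ A B C (e {i}) + P A₀ A B C (e {j})
      = P A₀ A B C (e {i,j}) + P A₀ A B C (e (∅ : Finset (Fin n)))
        + 2 * B ⟨(i,j), hij⟩ := by
    rw [expand2, expand2]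
    have hA : ∑ m : Fin n, A m * (q1 (e {i}) m + q1 (e {j}) m)
        = ∑ m : Fin n, A m * (q1 (e {i,j}) m + q1 (e (∅ : Finset (Fin n))) m) :=
      Finset.sum_congr rfl fun m _ => by rw [M1 i j m hij]
    have hBp : ∑ p : Pair n, B p * (q2 (e {i}) p + q2 (e {j}) p)
        = ∑ p : Pair n, B p * (q2 (e {i,j}) p + q2 (e (∅ : Finset (Fin n))) p)
          + 2 * B ⟨(i,j), hij⟩ := by
      have step : ∀ p : Pair n,
          B p * (q2 (e {i}) p + q2 (e {j}) p)
          = B p * (q2 (e {i,j}) p + q2 (e (∅ : Finset (Fin n))) p)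
            + (if p = (⟨(i,j), hij⟩ : Pair n) then 2 * B p else 0) := by
        intro p
        rw [M2 i j hij p, mul_add]
        congr 1
        split <;> ring
      rw [Finset.sum_congr rfl fun p _ => step p, Finset.sum_add_distrib,
        Finset.sum_ite_eq' Finset.univ _ (fun p => 2 * B p)]
      simp
    have hCt : ∑ t : Triple n, C t * (q3 (e {i}) t + q3 (e {j}) t)
        = ∑ t : Triple n, C t * (q3 (e {i,j}) t + q3 (e (∅ : Finset (Fin n))) t) := by
      simp [hC]
    rw [hA, hBp, hCt]
    ring
  simp only [h] at key
  simpa using key.symm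

lemma key0 (A₀ : ZMod 8) (A : Fin n → ZMod 8) (B : Pair n → ZMod 8) (C : Triple n → ZMod 8)
    (h : ∀ x, P A₀ A B C x = 0) : A₀ = 0 := by
  have := h (e (∅ : Finset (Fin n)))
  simpa [P, q1, q2, q3, e] using this

lemma keyA (A₀ : ZMod 8) (A : Fin n → ZMod 8) (B : Pair n → ZMod 8) (C : Triple n → ZMod 8)
    (h : ∀ x, P A₀ A B C x = 0) (hB : ∀ p, B p = 0) (hC : ∀ t, C t = 0) (m : Fin n) :
    A m = 0 := by
  have h0 : A₀ = 0 := key0 A₀ A B C h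
  have hm := h (e {m})
  have hq : ∀ i : Fin n, q1 (e {m}) i = if i = m then 1 else 0 := by
    intro i; by_cases hi : i = m <;> simp [q1, e, hi] <;> try decide
  simp only [P, hB, hC, zero_mul, Finset.sum_const_zero, add_zero, h0, zero_add, hq,
    mul_ite, mul_one, mul_zero] at hm
  rwa [Finset.sum_ite_eq' Finset.univ m A, if_pos (Finset.mem_univ m)] at hm

end PnfAux2

lemma zc8 : ∀ x y : ZMod 2, 4 * ((x.val : ZMod 8) - (y.val : ZMod 8)) = 0 → x = y := by decide
lemma zb8 : ∀ x y : ZMod 4, 2 * ((x.val : ZMod 8) - (y.val : ZMod 8)) = 0 → x = y := by decide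

theorem stmt7 {n : ℕ} (p p' : (Fin n → ZMod 2) → ZMod 8)
    (a₀ : ZMod 8) (a : Fin n → ZMod 8) (b : Pair n → ZMod 4) (c : Triple n → ZMod 2)
    (a₀' : ZMod 8) (a' : Fin n → ZMod 8) (b' : Pair n → ZMod 4) (c' : Triple n → ZMod 2)
    (hp : ∀ x, p x = pnf a₀ a b c x) (hp' : ∀ x, p' x = pnf a₀' a' b' c' x)
    (h : ∀ x, p x = p' x) :
    a₀ = a₀' ∧ a = a' ∧ b = b' ∧ c = c' := by
  have hpp : ∀ x, pnf a₀ a b c x = pnf a₀' a' b' c' x := fun x => by rw [← hp, ← hp', h]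
  have Hz : ∀ x, PnfAux.P (a₀ - a₀') (a - a')
      ((fun q => ((b q).val : ZMod 8)) - fun q => ((b' q).val : ZMod 8))
      ((fun t => ((c t).val : ZMod 8)) - fun t => ((c' t).val : ZMod 8)) x = 0 := by
    intro x
    rw [← PnfAux.P_sub, ← PnfAux.pnf_eq_P, ← PnfAux.pnf_eq_P, hpp x, sub_self]
  have hc : c = c' := by
    funext t
    obtain ⟨⟨i, j, k⟩, hij, hjk⟩ := t
    have hij' : i < j := hij
    have hjk' : j < k := hjk
    have h4 := PnfAux2.keyC _ _ _ _ Hz hij' hjk'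
    simp only [Pi.sub_apply] at h4
    exact zc8 _ _ h4
  have hC0 : ∀ t : Triple n,
      ((fun t => ((c t).val : ZMod 8)) - fun t => ((c' t).val : ZMod 8)) t = 0 := by
    intro t; simp [hc]
  have hb : b = b' := by
    funext q
    obtain ⟨⟨i, j⟩, hij⟩ := q
    have hij' : i < j := hij
    have h2 := PnfAux2.keyB _ _ _ _ Hz hC0 hij'
    simp only [Pi.sub_apply] at h2
    exact zb8 _ _ h2
  have hB0 : ∀ q : Pair n,
      ((fun q => ((b q).val : ZMod 8)) - fun q => ((b' q).val : ZMod 8)) q = 0 := by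
    intro q; simp [hb]
  have ha : a = a' := by
    funext m
    have hm := PnfAux2.keyA _ _ _ _ Hz hB0 hC0 m
    simpa [sub_eq_zero] using hm
  have h0 : a₀ = a₀' := by
    have h00 := PnfAux2.key0 _ _ _ _ Hz
    rwa [sub_eq_zero] at h00
  exact ⟨h0, ha, hb, hc⟩
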